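/- For every integer n ≥ 1, the number of pairs (T, r), where T is a simple graph on the vertex set Fin n that is a tree (connected and acyclic) and r ∈ Fin n is a distinguished root vertex, equals n^{n−1}. That is, the number of labelled rooted trees on n vertices is n^{n−1}. -/

import Mathlib

/-!
A tree rooted at `r` is the same as its parent map `f`: `f r = r` and every vertex reaches `r`
by iterating `f`. Joyal's bijection then matches trees rooted at `r` with a marked vertex `b`
with all maps `V → V`. The path `b, f b, …, r` is a list of distinct vertices; comparing it with
a fixed enumeration of its vertex set turns it into a permutation of that set, and the map
agrees with `f` elsewhere. The permuted set is recovered as the periodic points of the map,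
and with it the path and the tree. Hence (number of rooted trees) · n = n ^ n.
-/

open Function SimpleGraph

variable {V : Type*}

namespace Function

variable {g h : V → V}

theorem exists_iterate_mem_periodicPts [Finite V] (g : V → V) (v : V) :
    ∃ k, g^[k] v ∈ periodicPts g := by
  obtain ⟨m, n, hmn, heq⟩ := Finite.exists_ne_map_eq_of_infinite (g^[·] v)
  wlog hlt : m < n generalizing m n
  · exact this n m hmn.symm heq.symm (by omega)
  refine ⟨m, n - m, Nat.sub_pos_of_lt hlt, ?_⟩
  rw [IsPeriodicPt, IsFixedPt, ← iterate_add_apply, Nat.sub_add_cancel hlt.le, heq]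

theorem exists_iterate_mem_of_eqOn_compl {s : Set V} (hgh : Set.EqOn g h sᶜ)
    (hh : ∀ v, ∃ k, h^[k] v ∈ s) (v : V) : ∃ k, g^[k] v ∈ s := by
  obtain ⟨k, hk⟩ := hh v
  induction k generalizing v with
  | zero => exact ⟨0, hk⟩
  | succ k ih =>
    by_cases hv : v ∈ s
    · exact ⟨0, hv⟩
    obtain ⟨j, hj⟩ := ih (h v) hk
    exact ⟨j + 1, by rwa [iterate_succ_apply, hgh hv]⟩

theorem periodicPts_eq_of_surjOn {s : Set V} (hs : s.Finite) (hmaps : Set.MapsTo g s s)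
    (hsurj : Set.SurjOn g s s) (hreach : ∀ v, ∃ k, g^[k] v ∈ s) : periodicPts g = s := by
  refine Set.Subset.antisymm (fun v ⟨n, hn, hv⟩ => ?_) fun v hv => ?_
  · obtain ⟨k, hk⟩ := hreach v
    have hkn : k ≤ n * k := Nat.le_mul_of_pos_left k hn
    rw [← (hv.mul_const k).eq, ← Nat.sub_add_cancel hkn, iterate_add_apply]
    exact hmaps.iterate _ hk
  · have := hs.to_subtype
    have hinj := Finite.injective_iff_surjective.2 (hmaps.restrict_surjective_iff.2 hsurj)
    exact (Semiconj.mapsTo_periodicPts (hmaps.val_restrict_apply)) (hinj.mem_periodicPts ⟨v, hv⟩)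

end Function

structure IsParentMap (f : V → V) (r : V) : Prop where
  map_root : f r = r
  exists_iterate_eq : ∀ v, ∃ k, f^[k] v = r

def parentGraph (f : V → V) : SimpleGraph V := SimpleGraph.fromRel fun a b => f a = b

section ParentGraph

variable {f g : V → V} {r : V}

theorem parentGraph_adj {a b : V} : (parentGraph f).Adj a b ↔ a ≠ b ∧ (f a = b ∨ f b = a) :=
  SimpleGraph.fromRel_adj _ a b

theorem parentGraph_adj_apply {v : V} (hv : f v ≠ v) : (parentGraph f).Adj v (f v) :=
  parentGraph_adj.2 ⟨hv.symm, .inl rfl⟩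

namespace IsParentMap

theorem eq_root_of_isPeriodicPt (hf : IsParentMap f r) {n : ℕ} {v : V} (hv : IsPeriodicPt f n v)
    (hn : 0 < n) : v = r := by
  obtain ⟨k, hk⟩ := hf.exists_iterate_eq v
  have hkn : k ≤ n * k := Nat.le_mul_of_pos_left k hn
  calc v = f^[n * k] v := (hv.mul_const k).eq.symm
    _ = f^[n * k - k] (f^[k] v) := by rw [← iterate_add_apply, Nat.sub_add_cancel hkn]
    _ = r := by rw [hk, iterate_fixed hf.map_root]

theorem apply_ne_self (hf : IsParentMap f r) {v : V} (hv : v ≠ r) : f v ≠ v :=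
  fun hfix => hv (hf.eq_root_of_isPeriodicPt (n := 1) hfix one_pos)

theorem reachable_root (hf : IsParentMap f r) (v : V) : (parentGraph f).Reachable v r := by
  obtain ⟨k, hk⟩ := hf.exists_iterate_eq v
  induction k generalizing v with
  | zero => exact hk ▸ .refl v
  | succ k ih =>
    have hstep : (parentGraph f).Reachable v (f v) := by
      by_cases hv : f v = v
      · rw [hv]
      · exact (parentGraph_adj_apply hv).reachable
    exact hstep.trans (ih (f v) hk)

theorem connected (hf : IsParentMap f r) : (parentGraph f).Connected :=
  have : Nonempty V := ⟨r⟩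
  .mk fun a b => (hf.reachable_root a).trans (hf.reachable_root b).symm

/-- Every edge of the parent graph is `s(v, f v)` for some non-root `v`, so the connected
graph has at most `|V| - 1` edges. -/
theorem isTree [Finite V] (hf : IsParentMap f r) : (parentGraph f).IsTree := by
  classical
  refine isTree_iff_connected_and_card.2
    ⟨hf.connected, le_antisymm ?_ hf.connected.card_vert_le_card_edgeSet_add_one⟩
  let edge : {v // v ≠ r} → (parentGraph f).edgeSet := fun v =>
    ⟨s(v.1, f v.1), parentGraph_adj_apply (hf.apply_ne_self v.2)⟩
  have hedge : Surjective edge := by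
    rintro ⟨e, he⟩
    induction e using Sym2.ind with | _ a b => ?_
    obtain ⟨hab, hfab | hfba⟩ := parentGraph_adj.1 he
    · refine ⟨⟨a, fun har => hab ?_⟩, Subtype.ext (by simp [edge, hfab])⟩
      rw [← hfab, har, hf.map_root]
    · refine ⟨⟨b, fun hbr => hab ?_⟩, Subtype.ext (by simp [edge, hfba, Sym2.eq_swap])⟩
      rw [← hfba, hbr, hf.map_root]
  calc Nat.card (parentGraph f).edgeSet + 1 ≤ Nat.card {v // v ≠ r} + 1 :=
        Nat.add_le_add_right (Nat.card_le_card_of_surjective edge hedge) 1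
    _ = Nat.card V := by rw [← Finite.card_option, Nat.card_congr (Equiv.optionSubtypeNe r)]

/-- A parent map is recovered from its graph and root: by induction on the distance to the
root, the only neighbour of `v` that can be its parent is `f v`. -/
theorem eq_of_parentGraph_eq (hf : IsParentMap f r) (hg : IsParentMap g r)
    (h : parentGraph f = parentGraph g) : f = g := by
  suffices ∀ k v, f^[k] v = r → g v = f v from
    funext fun v => (this _ v (hf.exists_iterate_eq v).choose_spec).symm
  intro k
  induction k with
  | zero => rintro v (rfl : v = r); rw [hf.map_root, hg.map_root]
  | succ k ih =>
    intro v hk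
    by_cases hvr : v = r
    · rw [hvr, hf.map_root, hg.map_root]
    have hadj := h ▸ parentGraph_adj_apply (hf.apply_ne_self hvr)
    refine (parentGraph_adj.1 hadj).2.resolve_right fun hgfv => hvr ?_
    have h2 : f (f v) = v := by rw [← ih (f v) hk, hgfv]
    exact hf.eq_root_of_isPeriodicPt (n := 2) h2 two_pos

end IsParentMap

end ParentGraph

namespace SimpleGraph.IsTree

variable {G : SimpleGraph V}

theorem exists_isParentMap (hG : G.IsTree) (r : V) :
    ∃ f, IsParentMap f r ∧ parentGraph f = G := by
  choose p hp hpu using fun v => hG.existsUnique_path v r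
  have hp_root : p r = .nil := (hpu r .nil .nil).symm
  have hp_tail {v} (hv : ¬ (p v).Nil) : p (p v).snd = (p v).tail :=
    (hpu _ _ (hp v).tail).symm
  let f v := (p v).snd
  have hf : IsParentMap f r := by
    refine ⟨by simp [f, hp_root], fun v => ?_⟩
    induction hl : (p v).length using Nat.strong_induction_on generalizing v with | _ L ih => ?_
    by_cases hv : (p v).Nil
    · exact ⟨0, hv.eq⟩
    · have hlt : (p (f v)).length < L := by
        rw [← hl, ← Walk.length_tail_add_one hv, hp_tail hv]
        omega
      obtain ⟨k, hk⟩ := ih _ hlt (f v) rfl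
      exact ⟨k + 1, hk⟩
  have hadj {v} (hv : v ≠ f v) : G.Adj v (f v) := (p v).adj_snd fun hnil => hv (by
    obtain rfl : v = r := hnil.eq
    simp [f, hp_root])
  have hle : parentGraph f ≤ G := by
    intro a b hab
    obtain ⟨hne, rfl | rfl⟩ := parentGraph_adj.1 hab
    · exact hadj hne
    · exact (hadj hne.symm).symm
  exact ⟨f, hf, le_antisymm hle ((isTree_iff_minimal_connected.1 hG).le_of_le hf.connected hle)⟩

end SimpleGraph.IsTree

variable (V) in
noncomputable def parentMapEquivRootedTree [Finite V] :
    {q : (V → V) × V // IsParentMap q.1 q.2} ≃ {p : SimpleGraph V × V // p.1.IsTree} :=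
  Equiv.ofBijective (fun q => ⟨(parentGraph q.1.1, q.1.2), q.2.isTree⟩) <| by
    refine ⟨fun ⟨⟨f, r⟩, hf⟩ ⟨⟨f', r'⟩, hf'⟩ heq => ?_, fun ⟨⟨G, r⟩, hG⟩ => ?_⟩
    · obtain ⟨hgraph, rfl : r = r'⟩ := Prod.ext_iff.1 (congrArg Subtype.val heq)
      exact Subtype.ext (Prod.ext (hf.eq_of_parentGraph_eq hf' hgraph) rfl)
    · obtain ⟨f, hf, rfl⟩ := hG.exists_isParentMap r
      exact ⟨⟨(f, r), hf⟩, rfl⟩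

section Joyal

variable [DecidableEq V]

/-- `transfer l₁ l₂ h` sends `l₁[i]` to `l₂[i]`, fixes `l₁[i]` when `l₂` is too short, and
agrees with `h` off `l₁`. -/
def transfer (l₁ l₂ : List V) (h : V → V) (v : V) : V :=
  if v ∈ l₁ then l₂.getD (l₁.idxOf v) v else h v

variable {l₁ l₂ : List V} {h h' : V → V}

theorem transfer_getElem (hl : l₁.Nodup) {i : ℕ} (hi : i < l₁.length) :
    transfer l₁ l₂ h l₁[i] = l₂.getD i l₁[i] := by
  rw [transfer, if_pos (List.getElem_mem hi), hl.idxOf_getElem]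

theorem transfer_of_notMem {v : V} (hv : v ∉ l₁) : transfer l₁ l₂ h v = h v := if_neg hv

theorem transfer_congr (hh : ∀ v ∉ l₁, h v = h' v) :
    transfer l₁ l₂ h = transfer l₁ l₂ h' := by
  funext v
  by_cases hv : v ∈ l₁
  · simp [transfer, hv]
  · rw [transfer_of_notMem hv, transfer_of_notMem hv, hh v hv]

theorem transfer_map (hl : l₁.Nodup) (g : V → V) :
    transfer l₁ (l₁.map g) h = fun v => if v ∈ l₁ then g v else h v := by
  funext v
  split_ifs with hv
  · obtain ⟨i, hi, rfl⟩ := List.getElem_of_mem hv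
    rw [transfer_getElem hl, List.getD_eq_getElem _ _ (by simpa), List.getElem_map]
  · exact transfer_of_notMem hv

namespace IsParentMap

variable {f : V → V} {r : V} (hf : IsParentMap f r)

def depth (v : V) : ℕ := Nat.find (hf.exists_iterate_eq v)

theorem iterate_depth (v : V) : f^[hf.depth v] v = r := Nat.find_spec (hf.exists_iterate_eq v)

theorem iterate_injOn_Iic_depth (v : V) : Set.InjOn (f^[·] v) (Set.Iic (hf.depth v)) := by
  suffices ∀ i j, i < j → j ≤ hf.depth v → f^[i] v ≠ f^[j] v by
    intro i hi j hj heq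
    by_contra hne
    rcases Nat.lt_or_gt_of_ne hne with hij | hji
    · exact this i j hij hj heq
    · exact this j i hji hi heq.symm
  intro i j hij hj heq
  have hper : IsPeriodicPt f (j - i) (f^[i] v) := by
    rw [IsPeriodicPt, IsFixedPt, ← iterate_add_apply, Nat.sub_add_cancel hij.le, heq]
  exact Nat.find_min (hf.exists_iterate_eq v) (lt_of_lt_of_le hij hj)
    (hf.eq_root_of_isPeriodicPt hper (Nat.sub_pos_of_lt hij))

def spine (v : V) : List V := List.iterate f v (hf.depth v + 1)

@[simp] theorem length_spine (v : V) : (hf.spine v).length = hf.depth v + 1 :=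
  List.length_iterate ..

@[simp] theorem getElem_spine (v : V) {i : ℕ} (hi : i < (hf.spine v).length) :
    (hf.spine v)[i] = f^[i] v :=
  List.getElem_iterate ..

theorem nodup_spine (v : V) : (hf.spine v).Nodup := by
  rw [spine, ← List.range_map_iterate]
  refine List.Nodup.map_on (fun i hi j hj heq => hf.iterate_injOn_Iic_depth v ?_ ?_ heq)
    List.nodup_range <;> simp_all

theorem root_mem_spine (v : V) : r ∈ hf.spine v :=
  List.mem_iterate.2 ⟨hf.depth v, by simp, (hf.iterate_depth v).symm⟩

theorem head?_spine (v : V) : (hf.spine v).head? = some v := by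
  simp [spine, List.iterate]

theorem getLast?_spine (v : V) : (hf.spine v).getLast? = some r := by
  simp [List.getLast?_eq_getElem?, hf.iterate_depth]

theorem transfer_spine_tail (v : V) : transfer (hf.spine v) (hf.spine v).tail f = f := by
  funext w
  by_cases hw : w ∈ hf.spine v
  · obtain ⟨i, hi, rfl⟩ := List.getElem_of_mem hw
    rw [transfer_getElem (hf.nodup_spine v), getElem_spine]
    by_cases hi' : i + 1 < (hf.spine v).length
    · rw [List.getD_eq_getElem _ _ (by simpa using hi'), List.getElem_tail, getElem_spine,
        iterate_succ_apply']
    · have : i = hf.depth v := by simp at hi hi'; omega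
      rw [List.getD_eq_default _ _ (by simp; omega), this, hf.iterate_depth, hf.map_root]
  · exact transfer_of_notMem hw

noncomputable def joyal (b : V) : V → V :=
  transfer (hf.spine b).toFinset.toList (hf.spine b) f

theorem joyal_of_notMem {b v : V} (hv : v ∉ hf.spine b) : hf.joyal b v = f v :=
  transfer_of_notMem (by simpa using hv)

theorem map_joyal (b : V) : (hf.spine b).toFinset.toList.map (hf.joyal b) = hf.spine b := by
  have hlen : (hf.spine b).toFinset.toList.length = (hf.spine b).length := by
    rw [Finset.length_toList, List.toFinset_card_of_nodup (hf.nodup_spine b)]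
  refine List.ext_getElem (by simp [hlen]) fun i h₁ h₂ => ?_
  rw [List.getElem_map]
  unfold joyal
  rw [transfer_getElem (Finset.nodup_toList _), List.getD_eq_getElem _ _ h₂]

theorem periodicPts_joyal (b : V) : periodicPts (hf.joyal b) = {v | v ∈ hf.spine b} := by
  have hmem {v} : v ∈ hf.spine b ↔ v ∈ (hf.spine b).toFinset.toList.map (hf.joyal b) := by
    rw [hf.map_joyal]
  refine periodicPts_eq_of_surjOn (hf.spine b).finite_toSet (fun v hv => ?_) (fun v hv => ?_)
    ?_
  · exact hmem.2 (List.mem_map_of_mem (by simpa using hv))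
  · obtain ⟨w, hw, rfl⟩ := List.mem_map.1 (hmem.1 hv)
    exact ⟨w, by simpa using hw, rfl⟩
  · exact exists_iterate_mem_of_eqOn_compl (fun v hv => hf.joyal_of_notMem hv)
      fun v => ⟨hf.depth v, by rw [hf.iterate_depth]; exact hf.root_mem_spine b⟩

theorem transfer_spine_tail_joyal (b : V) :
    transfer (hf.spine b) (hf.spine b).tail (hf.joyal b) = f := by
  rw [transfer_congr fun v hv => hf.joyal_of_notMem hv, hf.transfer_spine_tail]

end IsParentMap

section FollowPath

variable {l : List V} {h : V → V}

theorem iterate_transfer_tail_getElem (hl : l.Nodup) {i j : ℕ} (hij : i + j < l.length) :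
    (transfer l l.tail h)^[j] l[i] = l[i + j] := by
  induction j with
  | zero => rfl
  | succ j ih =>
    rw [iterate_succ_apply', ih (by omega), transfer_getElem hl,
      List.getD_eq_getElem _ _ (by simp; omega), List.getElem_tail]
    rfl

theorem transfer_tail_getLast (hl : l.Nodup) (hne : l ≠ []) :
    transfer l l.tail h (l.getLast hne) = l.getLast hne := by
  rw [List.getLast_eq_getElem, transfer_getElem hl, List.getD_eq_default _ _ (by simp)]

variable (hl : l.Nodup) (hne : l ≠ []) (hreach : ∀ v, ∃ k, h^[k] v ∈ l)
include hl hreach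

theorem isParentMap_transfer_tail : IsParentMap (transfer l l.tail h) (l.getLast hne) where
  map_root := transfer_tail_getLast hl hne
  exists_iterate_eq v := by
    obtain ⟨k, hk⟩ := exists_iterate_mem_of_eqOn_compl (s := {v | v ∈ l})
      (fun w hw => transfer_of_notMem hw) hreach v
    obtain ⟨i, hi, hik⟩ := List.getElem_of_mem hk
    refine ⟨l.length - 1 - i + k, ?_⟩
    rw [iterate_add_apply, ← hik, iterate_transfer_tail_getElem hl (by omega),
      List.getLast_eq_getElem]
    congr 1
    omega

theorem spine_transfer_tail :
    (isParentMap_transfer_tail hl hne hreach).spine (l.head hne) = l := by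
  have hlen : 0 < l.length := List.length_pos_iff.2 hne
  have hdepth :
      (isParentMap_transfer_tail hl hne hreach).depth (l.head hne) = l.length - 1 := by
    rw [IsParentMap.depth, Nat.find_eq_iff, List.head_eq_getElem, List.getLast_eq_getElem]
    refine ⟨by rw [iterate_transfer_tail_getElem hl (by omega)]; simp, fun m hm heq => ?_⟩
    rw [iterate_transfer_tail_getElem hl (by omega), hl.getElem_inj_iff] at heq
    omega
  refine List.ext_getElem (by simp [hdepth]; omega) fun i h₁ h₂ => ?_
  rw [IsParentMap.getElem_spine, List.head_eq_getElem,
    iterate_transfer_tail_getElem hl (by simpa using h₂)]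
  simp

end FollowPath

noncomputable def joyalMap (x : {q : (V → V) × V // IsParentMap q.1 q.2} × V) : V → V :=
  x.1.2.joyal x.2

/-- The periodic points of `joyal` form the spine, which `joyal` lists in order; the spine and
`joyal` determine the parent map. -/
theorem joyalMap_injective : Injective (joyalMap (V := V)) := by
  rintro ⟨⟨⟨f, r⟩, hf : IsParentMap f r⟩, b⟩ ⟨⟨⟨f', r'⟩, hf' : IsParentMap f' r'⟩, b'⟩
    (heq : hf.joyal b = hf'.joyal b')
  have hset : (hf.spine b).toFinset = (hf'.spine b').toFinset := Finset.coe_injective <| by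
    simpa [← hf.periodicPts_joyal, ← hf'.periodicPts_joyal] using congrArg periodicPts heq
  have hspine : hf.spine b = hf'.spine b' := by
    rw [← hf.map_joyal, ← hf'.map_joyal, hset, heq]
  have hf_eq : f = f' := by
    rw [← hf.transfer_spine_tail_joyal b, ← hf'.transfer_spine_tail_joyal b', hspine, heq]
  have hb : b = b' := Option.some_injective _ <| by
    rw [← hf.head?_spine, ← hf'.head?_spine, hspine]
  have hr : r = r' := Option.some_injective _ <| by
    rw [← hf.getLast?_spine b, ← hf'.getLast?_spine b', hspine]
  subst hf_eq hb hr
  rfl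

/-- Conversely, an endofunction `g` permutes its periodic points `Z`; the list `g z` for `z` in
the canonical order of `Z` is the spine of the tree obtained by following `g` off `Z`. -/
theorem joyalMap_surjective [Finite V] [Nonempty V] : Surjective (joyalMap (V := V)) := by
  intro g
  obtain ⟨Z, hZ⟩ : ∃ Z : Finset V, ↑Z = periodicPts g := ⟨_, (Set.toFinite _).coe_toFinset⟩
  have hbij : Set.BijOn g Z Z := hZ ▸ bijOn_periodicPts g
  set l := Z.toList.map g
  have hl : l.Nodup := Z.nodup_toList.map_on fun x hx y hy =>
    hbij.injOn (Finset.mem_toList.1 hx) (Finset.mem_toList.1 hy)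
  have hlZ : l.toFinset = Z := by
    ext v
    simpa [l] using Set.ext_iff.1 hbij.image_eq v
  have hmem {v} : v ∈ l ↔ v ∈ Z := by rw [← List.mem_toFinset, hlZ]
  have hreach (v : V) : ∃ k, g^[k] v ∈ l := by
    obtain ⟨k, hk⟩ := exists_iterate_mem_periodicPts g v
    exact ⟨k, hmem.2 (by rwa [← Finset.mem_coe, hZ])⟩
  have hne : l ≠ [] := List.ne_nil_of_mem (hreach (Classical.arbitrary V)).choose_spec
  let hF := isParentMap_transfer_tail hl hne hreach
  refine ⟨⟨⟨(transfer l l.tail g, l.getLast hne), hF⟩, l.head hne⟩, ?_⟩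
  change hF.joyal (l.head hne) = g
  unfold IsParentMap.joyal
  rw [spine_transfer_tail hl hne hreach, hlZ, transfer_map Z.nodup_toList]
  funext v
  split_ifs with hv
  · rfl
  · exact transfer_of_notMem fun hvl => hv (Finset.mem_toList.2 (hmem.1 hvl))

end Joyal

theorem card_rootedTrees_mul_card [Finite V] [Nonempty V] :
    Nat.card {p : SimpleGraph V × V // p.1.IsTree} * Nat.card V = Nat.card V ^ Nat.card V := by
  classical
  rw [← Nat.card_congr (parentMapEquivRootedTree V), ← Nat.card_prod, ← Nat.card_fun]
  exact Nat.card_congr (Equiv.ofBijective _ ⟨joyalMap_injective, joyalMap_surjective⟩)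

/-- The number of labelled rooted trees on the vertex set `Fin n` (`n ≥ 1`), counted as
pairs `(T, r)` of a tree and a distinguished root vertex, equals `n^(n−1)`. -/
theorem card_rooted_trees (n : ℕ) (hn : 1 ≤ n) :
    Nat.card {p : SimpleGraph (Fin n) × Fin n // p.1.IsTree} = n ^ (n - 1) := by
  have : Nonempty (Fin n) := ⟨⟨0, hn⟩⟩
  have h := card_rootedTrees_mul_card (V := Fin n)
  rw [Nat.card_fin] at h
  apply Nat.eq_of_mul_eq_mul_right hn
  rw [h, ← pow_succ, Nat.sub_add_cancel hn]
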